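/- arXiv:1105.2430 — 2 statements merged into one kernel-verified Lean document; each statement's English description precedes it below -/
import Mathlib

section
/- Key positivity estimate: for s ≤ -1 let η = -s + log(-s). Then there exist r > 0 and c > 0 such that for all s ≤ -1, (η/(-s+1)²)/(1 + η/(-s+1)²) - 4r/η ≥ c/s². -/
theorem stmt_8 :
    ∃ r > (0 : ℝ), ∃ c > (0 : ℝ), ∀ s : ℝ, s ≤ -1 →
      ((-s + Real.log (-s)) / (-s + 1) ^ 2) / (1 + (-s + Real.log (-s)) / (-s + 1) ^ 2)
        - 4 * r / (-s + Real.log (-s)) ≥ c / s ^ 2 := by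
  refine ⟨1/48, by norm_num, 1/12, by norm_num, fun s hs => ?_⟩
  have ht1 : (1 : ℝ) ≤ -s := by linarith
  have ht0 : (0 : ℝ) < -s := by linarith
  have hlog0 : 0 ≤ Real.log (-s) := Real.log_nonneg ht1
  have hlogt : Real.log (-s) ≤ -s - 1 := Real.log_le_sub_one_of_pos ht0
  set t : ℝ := -s with htdef
  set η : ℝ := t + Real.log t with hη
  have hη1 : t ≤ η := by simp [hη]; linarith
  have hη2 : η ≤ 2 * t := by simp [hη]; linarith
  have hη0 : 0 < η := lt_of_lt_of_le ht0 hη1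
  have hP : (0 : ℝ) < (t + 1) ^ 2 := by positivity
  have hPη : (0 : ℝ) < (t + 1) ^ 2 + η := by positivity
  have key : η / (t + 1) ^ 2 / (1 + η / (t + 1) ^ 2) = η / ((t + 1) ^ 2 + η) := by
    have hP' : ((t + 1) ^ 2 : ℝ) ≠ 0 := ne_of_gt hP
    have hPη' : ((t + 1) ^ 2 + η : ℝ) ≠ 0 := ne_of_gt hPη
    have h1a : (1 + η / (t + 1) ^ 2 : ℝ) ≠ 0 := by positivity
    field_simp
  rw [key]
  have h1 : 1 / (6 * t) ≤ η / ((t + 1) ^ 2 + η) := by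
    rw [div_le_div_iff₀ (by positivity) hPη]
    nlinarith
  have h2 : 4 * (1 / 48) / η ≤ 1 / (12 * t) := by
    rw [div_le_div_iff₀ hη0 (by positivity)]
    nlinarith
  have hs2 : s ^ 2 = t ^ 2 := by rw [htdef]; ring
  rw [hs2]
  have h3 : (1 / 12 : ℝ) / t ^ 2 ≤ 1 / (12 * t) := by
    rw [div_le_div_iff₀ (by positivity) (by positivity)]
    nlinarith
  have h4 : 1 / (6 * t) - 1 / (12 * t) = 1 / (12 * t) := by
    field_simp
    ring
  linarith
end

section
/- For t ≥ 1 and η = t + log t, ((1+1/t)²/η²) / (1/η² + 1/(η(t+1)²)) ≤ (1+1/t)² / (1 + η/(t+1)²) ≤ 4/(1 + η/(t+1)²). -/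
theorem stmt_11 (t : ℝ) (ht : 1 ≤ t) :
    ((1 + 1 / t) ^ 2 / (t + Real.log t) ^ 2) /
        (1 / (t + Real.log t) ^ 2 + 1 / ((t + Real.log t) * (t + 1) ^ 2))
      ≤ 4 / (1 + (t + Real.log t) / (t + 1) ^ 2) := by
  have ht0 : (0:ℝ) < t := by linarith
  have hlog : 0 ≤ Real.log t := Real.log_nonneg ht
  have hη : 0 < t + Real.log t := by linarith
  have ht1 : 0 < (t + 1)^2 := by positivity
  have h1 : (1 + 1/t)^2 ≤ 4 := by
    have : 1/t ≤ 1 := by rw [div_le_one ht0]; linarith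
    have h0 : 0 < 1/t := by positivity
    nlinarith
  rw [div_le_div_iff₀ (by positivity) (by positivity)]
  have key : ((1 + 1/t)^2 / (t + Real.log t)^2) * (1 + (t + Real.log t)/(t+1)^2)
      = (1 + 1/t)^2 * (1/(t + Real.log t)^2 + 1/((t + Real.log t)*(t+1)^2)) := by
    field_simp
  rw [key]
  have hden : 0 < 1/(t + Real.log t)^2 + 1/((t + Real.log t)*(t+1)^2) := by positivity
  nlinarith [mul_le_mul_of_nonneg_right h1 hden.le]
end
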